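/- arXiv:2207.08266 — 2 statements merged into one kernel-verified Lean document; each statement's English description precedes it below -/
import Mathlib

section
/- If Φ is a tight frame in a finite-dimensional Hilbert space H, then every element of its symmetry group Sym(Φ) is a unitary operator. -/
/-!
If `M` maps `Φ j` to `Φ (σ j)`, the frame coefficients of `M† v` are those of `v` permuted:
`⟪Φ j, M† v⟫ = ⟪Φ (σ j), v⟫`. For a tight frame the sum of their squared moduli is `A ‖v‖²`,
so `M†` is an isometry, i.e. `M M† = 1`; in finite dimension this forces `M† M = 1`, which says
that `M` is unitary.
-/

section

open scoped InnerProductSpace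

variable {𝕜 E S : Type*} [RCLike 𝕜] [NormedAddCommGroup E] [InnerProductSpace 𝕜 E]

variable (𝕜) in
def IsTightFrame [Fintype S] (Φ : S → E) (A : ℝ) : Prop :=
  ∀ v : E, ∑ j, ‖⟪Φ j, v⟫_𝕜‖ ^ 2 = A * ‖v‖ ^ 2

section FiniteDimensional

variable [FiniteDimensional 𝕜 E]

theorem LinearMap.adjoint_comp_self_eq_id_of_norm_map {F : Type*} [NormedAddCommGroup F]
    [InnerProductSpace 𝕜 F] [FiniteDimensional 𝕜 F] {U : E →ₗ[𝕜] F}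
    (hU : ∀ x, ‖U x‖ = ‖x‖) : U.adjoint ∘ₗ U = LinearMap.id := by
  have hinner := (LinearMap.norm_map_iff_inner_map_map U).mp hU
  ext x
  refine ext_inner_right 𝕜 fun y => ?_
  rw [LinearMap.comp_apply, LinearMap.adjoint_inner_left, hinner, LinearMap.id_apply]

theorem LinearMap.inner_map_map_of_norm_adjoint_map {T : Module.End 𝕜 E}
    (hT : ∀ x, ‖T.adjoint x‖ = ‖x‖) (x y : E) : ⟪T x, T y⟫_𝕜 = ⟪x, y⟫_𝕜 := by
  have hright : T * T.adjoint = 1 := by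
    simpa only [LinearMap.adjoint_adjoint, Module.End.mul_eq_comp, Module.End.one_eq_id] using
      LinearMap.adjoint_comp_self_eq_id_of_norm_map hT
  have hleft : T.adjoint * T = 1 := mul_eq_one_comm.mp hright
  rw [← LinearMap.adjoint_inner_right, ← Module.End.mul_apply, hleft, Module.End.one_apply]

theorem sum_norm_inner_adjoint_eq_of_map_eq_comp_perm [Fintype S] {Φ : S → E}
    {T : Module.End 𝕜 E} {σ : Equiv.Perm S} (hT : ∀ j, T (Φ j) = Φ (σ j)) (w : E) :
    ∑ j, ‖⟪Φ j, T.adjoint w⟫_𝕜‖ ^ 2 = ∑ j, ‖⟪Φ j, w⟫_𝕜‖ ^ 2 := by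
  simp only [LinearMap.adjoint_inner_right, hT]
  exact Equiv.sum_comp σ fun j => ‖⟪Φ j, w⟫_𝕜‖ ^ 2

theorem IsTightFrame.norm_adjoint_map_of_map_eq_comp_perm [Fintype S] {Φ : S → E} {A : ℝ}
    (hΦ : IsTightFrame 𝕜 Φ A) (hA : A ≠ 0) {T : Module.End 𝕜 E} {σ : Equiv.Perm S}
    (hT : ∀ j, T (Φ j) = Φ (σ j)) (w : E) : ‖T.adjoint w‖ = ‖w‖ := by
  have hsq : A * ‖T.adjoint w‖ ^ 2 = A * ‖w‖ ^ 2 := by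
    rw [← hΦ, ← hΦ, sum_norm_inner_adjoint_eq_of_map_eq_comp_perm hT]
  exact (pow_left_inj₀ (norm_nonneg _) (norm_nonneg _) two_ne_zero).mp
    (mul_left_cancel₀ hA hsq)

end FiniteDimensional

end

open scoped ComplexInnerProductSpace

/-- Every symmetry of a tight frame is unitary (preserves the inner product). -/
theorem tight_frame_symmetries_unitary {H : Type*} [NormedAddCommGroup H]
    [InnerProductSpace ℂ H] [FiniteDimensional ℂ H] {S : Type*} [Fintype S] (Φ : S → H)
    (A : ℝ) (hA : 0 < A)
    (htight : ∀ v : H, ∑ j, ‖⟪Φ j, v⟫‖ ^ 2 = A * ‖v‖ ^ 2)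
    (M : H ≃ₗ[ℂ] H) (hM : ∃ σ : Equiv.Perm S, ∀ j, M (Φ j) = Φ (σ j)) :
    ∀ v w : H, ⟪M v, M w⟫ = ⟪v, w⟫ := by
  obtain ⟨σ, hσ⟩ := hM
  have hΦ : IsTightFrame ℂ Φ A := htight
  exact LinearMap.inner_map_map_of_norm_adjoint_map (T := (M : Module.End ℂ H))
    (hΦ.norm_adjoint_map_of_map_eq_comp_perm hA.ne' hσ)
end

section
/- If ρ : G → U(H) is an irreducible unitary representation of a finite group G and v ∈ H is nonzero, then the orbit Φ = (ρ(g)v)_{g∈G} is a tight frame: Σ_{g∈G} |⟨w, ρ(g)v⟩|² = (|G|·‖v‖²/dim H)·‖w‖² for every w ∈ H. -/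
/-!
The frame operator `S w = ∑ g, ⟪ρ g v, w⟫ • ρ g v` of the orbit commutes with every `ρ h`, because
`ρ h` merely permutes the orbit. By Schur's lemma `S = c • 1`; taking traces gives
`c · dim H = ∑ g, ‖ρ g v‖² = |G| · ‖v‖²`, and `⟪w, S w⟫ = c ‖w‖²` is the frame identity.
-/

open scoped ComplexInnerProductSpace InnerProductSpace

theorem Module.End.exists_eq_smul_one_of_forall_commute {K V ι : Type*} [Field K] [IsAlgClosed K]
    [AddCommGroup V] [Module K V] [FiniteDimensional K V] [Nontrivial V]
    (T : ι → Module.End K V)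
    (hirr : ∀ W : Submodule K V, (∀ i, W.map (T i) ≤ W) → W = ⊥ ∨ W = ⊤)
    {f : Module.End K V} (hf : ∀ i, Commute f (T i)) : ∃ c : K, f = c • 1 := by
  obtain ⟨c, hc⟩ := f.exists_eigenvalue
  have htop : f.eigenspace c = ⊤ :=
    (hirr _ fun i => Submodule.map_le_iff_le_comap.mpr
      (Module.End.mapsTo_genEigenspace_of_comm (hf i) c 1)).resolve_left hc
  refine ⟨c, LinearMap.ext fun x => ?_⟩
  simpa using Module.End.mem_eigenspace_iff.mp (htop ▸ Submodule.mem_top : x ∈ f.eigenspace c)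

section FrameOperator

variable {𝕜 E ι : Type*} [RCLike 𝕜] [NormedAddCommGroup E] [InnerProductSpace 𝕜 E] [Fintype ι]

open InnerProductSpace

variable (𝕜) in
noncomputable def frameOperator (f : ι → E) : E →L[𝕜] E :=
  ∑ i, rankOne 𝕜 (f i) (f i)

theorem frameOperator_apply (f : ι → E) (w : E) :
    frameOperator 𝕜 f w = ∑ i, ⟪f i, w⟫_𝕜 • f i := by
  simp [frameOperator]

theorem inner_frameOperator_self (f : ι → E) (w : E) :
    ⟪w, frameOperator 𝕜 f w⟫_𝕜 = ((∑ i, ‖⟪w, f i⟫_𝕜‖ ^ 2 : ℝ) : 𝕜) := by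
  simp only [frameOperator_apply, inner_sum, inner_smul_right, RCLike.ofReal_sum,
    RCLike.ofReal_pow, ← RCLike.mul_conj, inner_conj_symm, mul_comm]

theorem trace_frameOperator [FiniteDimensional 𝕜 E] (f : ι → E) :
    LinearMap.trace 𝕜 E (frameOperator 𝕜 f) = ((∑ i, ‖f i‖ ^ 2 : ℝ) : 𝕜) := by
  simp [frameOperator, trace_rankOne, inner_self_eq_norm_sq_to_K]

theorem frameOperator_comp_equiv (f : ι → E) (σ : ι ≃ ι) :
    frameOperator 𝕜 (f ∘ σ) = frameOperator 𝕜 f :=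
  Fintype.sum_equiv σ _ _ fun _ => rfl

theorem frameOperator_map_comp (U : E ≃ₗᵢ[𝕜] E) (f : ι → E) :
    frameOperator 𝕜 (fun i => U (f i)) ∘L (U : E →L[𝕜] E) =
      (U : E →L[𝕜] E) ∘L frameOperator 𝕜 f := by
  ext w
  simp [frameOperator_apply, LinearIsometryEquiv.inner_map_map]

theorem sum_norm_inner_sq_eq_of_frameOperator_eq_smul [FiniteDimensional 𝕜 E] [Nontrivial E]
    {f : ι → E} {c : 𝕜} (hc : (frameOperator 𝕜 f : E →ₗ[𝕜] E) = c • 1) (w : E) :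
    ∑ i, ‖⟪w, f i⟫_𝕜‖ ^ 2 = (∑ i, ‖f i‖ ^ 2) / Module.finrank 𝕜 E * ‖w‖ ^ 2 := by
  have hc_apply : ∀ x, frameOperator 𝕜 f x = c • x := fun x => LinearMap.congr_fun hc x
  have htrace : ((∑ i, ‖f i‖ ^ 2 : ℝ) : 𝕜) = c * Module.finrank 𝕜 E := by
    rw [← trace_frameOperator, hc, map_smul, LinearMap.trace_one, smul_eq_mul]
  have hinner : ((∑ i, ‖⟪w, f i⟫_𝕜‖ ^ 2 : ℝ) : 𝕜) = c * ‖w‖ ^ 2 := by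
    rw [← inner_frameOperator_self, hc_apply, inner_smul_right, inner_self_eq_norm_sq_to_K]
  have hdim : (Module.finrank 𝕜 E : 𝕜) ≠ 0 := Nat.cast_ne_zero.mpr Module.finrank_pos.ne'
  apply RCLike.ofReal_injective (K := 𝕜)
  rw [hinner, eq_div_of_mul_eq hdim htrace.symm]
  push_cast
  ring

end FrameOperator

theorem commute_frameOperator_orbit {𝕜 G E : Type*} [RCLike 𝕜] [Group G] [Fintype G]
    [NormedAddCommGroup E] [InnerProductSpace 𝕜 E] (ρ : G →* (E ≃ₗᵢ[𝕜] E)) (v : E) (h : G) :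
    Commute (frameOperator 𝕜 (fun g => ρ g v) : E →ₗ[𝕜] E) (ρ h).toLinearEquiv.toLinearMap := by
  have hperm : frameOperator 𝕜 (fun g => ρ h (ρ g v)) = frameOperator 𝕜 fun g => ρ g v := by
    rw [← frameOperator_comp_equiv (fun g => ρ g v) (Equiv.mulLeft h)]
    simp [Function.comp_def, LinearIsometryEquiv.coe_mul]
  have hmap := congrArg ContinuousLinearMap.toLinearMap
    (frameOperator_map_comp (ρ h) fun g => ρ g v)
  rwa [hperm] at hmap

theorem orbit_of_irreducible_unitary_is_tight_frame_general {G : Type*} [Group G] [Fintype G]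
    {H : Type*} [NormedAddCommGroup H] [InnerProductSpace ℂ H] [FiniteDimensional ℂ H]
    [Nontrivial H] (ρ : G →* (H ≃ₗᵢ[ℂ] H))
    (hirr : ∀ W : Submodule ℂ H,
      (∀ g : G, W.map (ρ g).toLinearEquiv.toLinearMap ≤ W) → W = ⊥ ∨ W = ⊤)
    (v : H) :
    ∀ w : H, ∑ g : G, ‖⟪w, ρ g v⟫‖ ^ 2 =
      (Fintype.card G * ‖v‖ ^ 2 / Module.finrank ℂ H) * ‖w‖ ^ 2 := by
  intro w
  obtain ⟨c, hc⟩ := Module.End.exists_eq_smul_one_of_forall_commute _ hirr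
    (commute_frameOperator_orbit ρ v)
  rw [sum_norm_inner_sq_eq_of_frameOperator_eq_smul hc]
  simp only [LinearIsometryEquiv.norm_map, Finset.sum_const, Finset.card_univ, nsmul_eq_mul]

/-- The orbit of a nonzero vector under an irreducible **unitary** representation of a
finite group is a tight frame with frame constant `|G|·‖v‖²/dim H`. -/
theorem orbit_of_irreducible_unitary_is_tight_frame {G : Type*} [Group G] [Fintype G]
    {H : Type*} [NormedAddCommGroup H] [InnerProductSpace ℂ H] [FiniteDimensional ℂ H]
    [Nontrivial H] (ρ : G →* (H ≃ₗᵢ[ℂ] H))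
    (hirr : ∀ W : Submodule ℂ H,
      (∀ g : G, W.map (ρ g).toLinearEquiv.toLinearMap ≤ W) → W = ⊥ ∨ W = ⊤)
    (v : H) (hv : v ≠ 0) :
    ∀ w : H, ∑ g : G, ‖⟪w, ρ g v⟫‖ ^ 2 =
      (Fintype.card G * ‖v‖ ^ 2 / Module.finrank ℂ H) * ‖w‖ ^ 2 :=
  orbit_of_irreducible_unitary_is_tight_frame_general ρ hirr v
end
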